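/- arXiv:2011.12034 — 2 statements merged into one kernel-verified Lean document; each statement's English description precedes it below -/
import Mathlib

section
/- A circle map defined on a dense subset of S^1 with dense image that strictly preserves the circular (cyclic) order extends uniquely to an orientation-preserving homeomorphism of S^1. -/
open Set

noncomputable section

instance : Fact ((0:ℝ) < 1) := ⟨one_pos⟩

/-- The representative in `[0,1)` of a point of the circle `ℝ/ℤ`. -/
noncomputable def circleRep (x : AddCircle (1:ℝ)) : ℝ :=
  (AddCircle.equivIco 1 0 x).1

/-- `circleSbtw a b c` : going counterclockwise from `a`, one meets `b` strictly
before `c` (strict cyclic betweenness on the circle). -/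
def circleSbtw (a b c : AddCircle (1:ℝ)) : Prop :=
  0 < circleRep (b - a) ∧ circleRep (b - a) < circleRep (c - a)

/-!
Fix `a : ℝ` over a point of `D`. Counting turns from `a`, `ψ` lifts to a map `f` on the dense,
`1`-periodic preimage of `D` in `ℝ` with `f (t + 1) = f t + 1`, and the cyclic-order hypothesis
makes `f` strictly increasing. A strictly increasing map on a dense set with dense image extends,
by suprema, to an increasing bijection `F` of `ℝ`, which is automatically continuous; by density
`F` still commutes with `t ↦ t + 1`, so it descends to a homeomorphism of `ℝ/ℤ`, and this
homeomorphism preserves the cyclic order because `F` is increasing. Uniqueness holds because two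
continuous maps agreeing on a dense set are equal.
-/

local notation "𝕊" => AddCircle (1:ℝ)

open QuotientAddGroup

theorem AddCircle.coe_intCast_eq_zero (n : ℤ) : ((n : ℝ) : 𝕊) = 0 :=
  (AddCircle.coe_eq_zero_iff 1).2 ⟨n, by simp⟩

theorem circleRep_coe (t : ℝ) : circleRep (t : 𝕊) = Int.fract t := by
  simp [circleRep]

theorem coe_circleRep (x : 𝕊) : ((circleRep x : ℝ) : 𝕊) = x :=
  (AddCircle.equivIco 1 0).symm_apply_apply x

theorem circleRep_mem_Ico (x : 𝕊) : circleRep x ∈ Ico (0:ℝ) 1 := by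
  simpa [circleRep] using (AddCircle.equivIco 1 0 x).2

theorem circleRep_eq_zero_iff {x : 𝕊} : circleRep x = 0 ↔ x = 0 :=
  ⟨fun h => by rw [← coe_circleRep x, h, AddCircle.coe_zero], fun h => by
    simpa [h] using circleRep_coe 0⟩

theorem circleSbtw_coe_iff (a b c : ℝ) :
    circleSbtw a b c ↔ 0 < Int.fract (b - a) ∧ Int.fract (b - a) < Int.fract (c - a) := by
  simp only [circleSbtw, ← AddCircle.coe_sub, circleRep_coe]

theorem Dense.exists_circleSbtw {D : Set 𝕊} (hD : Dense D) {x z : 𝕊}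
    (h : 0 < circleRep (z - x)) : ∃ w ∈ D, circleSbtw x z w := by
  obtain ⟨a, rfl⟩ := mk_surjective x
  obtain ⟨c, rfl⟩ := mk_surjective z
  rw [← AddCircle.coe_sub, circleRep_coe] at h
  obtain ⟨u, hu, hcu, hua⟩ := (dense_preimage_mk.2 hD).exists_between
    (show a + Int.fract (c - a) < a + 1 by linarith [Int.fract_lt_one (c - a)])
  refine ⟨u, hu, (circleSbtw_coe_iff a c u).2 ⟨h, ?_⟩⟩
  have hfract : Int.fract (u - a) = u - a :=
    Int.fract_eq_self.2 ⟨by linarith [Int.fract_nonneg (c - a)], by linarith⟩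
  rw [hfract]
  linarith

section MonotoneExtension

variable {S : Set ℝ} {f : ℝ → ℝ}

theorem Continuous.surjective_of_denseRange {α : Type*} [TopologicalSpace α]
    [PreconnectedSpace α] {F : α → ℝ} (hF : Continuous F) (hd : DenseRange F) :
    Function.Surjective F := by
  intro y
  obtain ⟨_, ⟨a, rfl⟩, -, hay⟩ := hd.exists_between (sub_one_lt y)
  obtain ⟨_, ⟨b, rfl⟩, hyb, -⟩ := hd.exists_between (lt_add_one y)
  exact (isPreconnected_range hF).ordConnected.out (mem_range_self a) (mem_range_self b)
    ⟨hay.le, hyb.le⟩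

theorem StrictMonoOn.exists_strictMono_eqOn (hf : StrictMonoOn f S) (hS : Dense S) :
    ∃ F : ℝ → ℝ, StrictMono F ∧ EqOn F f S := by
  have hbdd : ∀ x, BddAbove (f '' (S ∩ Iic x)) := fun x => by
    obtain ⟨s, hs, hxs⟩ := hS.exists_gt x
    exact ⟨f s, forall_mem_image.2 fun t ht => (hf ht.1 hs (ht.2.trans_lt hxs)).le⟩
  have hne : ∀ x, (f '' (S ∩ Iic x)).Nonempty := fun x => by
    obtain ⟨s, hs, hsx⟩ := hS.exists_lt x
    exact ⟨f s, s, ⟨hs, hsx.le⟩, rfl⟩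
  have le_sup {s x} (hs : s ∈ S) (hsx : s ≤ x) : f s ≤ sSup (f '' (S ∩ Iic x)) :=
    le_csSup (hbdd x) ⟨s, ⟨hs, hsx⟩, rfl⟩
  have sup_le {s x} (hs : s ∈ S) (hxs : x ≤ s) : sSup (f '' (S ∩ Iic x)) ≤ f s :=
    csSup_le (hne x) <| forall_mem_image.2 fun t ht => hf.monotoneOn ht.1 hs (ht.2.trans hxs)
  refine ⟨fun x => sSup (f '' (S ∩ Iic x)), fun x y hxy => ?_,
    fun s hs => (sup_le hs le_rfl).antisymm (le_sup hs le_rfl)⟩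
  obtain ⟨s, hs, hxs, hsy⟩ := hS.exists_between hxy
  obtain ⟨t, ht, hst, hty⟩ := hS.exists_between hsy
  exact (sup_le hs hxs.le).trans_lt ((hf hs ht hst).trans_le (le_sup ht hty.le))

theorem StrictMonoOn.exists_orderIso_eqOn (hf : StrictMonoOn f S) (hS : Dense S)
    (hfS : Dense (f '' S)) : ∃ F : ℝ ≃o ℝ, EqOn F f S := by
  obtain ⟨F, hF, hFf⟩ := hf.exists_strictMono_eqOn hS
  have hdense : DenseRange F := hfS.mono (hFf.image_eq ▸ image_subset_range F S)
  exact ⟨StrictMono.orderIsoOfSurjective F hF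
    ((hF.monotone.continuous_of_denseRange hdense).surjective_of_denseRange hdense), hFf⟩

end MonotoneExtension

theorem StrictMono.fract_map_sub_map {F : ℝ → ℝ} (hF : StrictMono F)
    (hF1 : ∀ x, F (x + 1) = F x + 1) (a b : ℝ) :
    Int.fract (F b - F a) = F (a + Int.fract (b - a)) - F a := by
  have hb : F b = F (a + Int.fract (b - a)) + ⌊b - a⌋ := by
    have := AddConstMapClass.map_add_int (⟨F, hF1⟩ : AddConstMap ℝ ℝ 1 1)
      (a + Int.fract (b - a)) ⌊b - a⌋
    rwa [AddConstMap.coe_mk, add_assoc, Int.fract_add_floor, add_sub_cancel] at this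
  rw [hb, add_sub_right_comm, Int.fract_add_intCast, Int.fract_eq_self]
  have h0 := Int.fract_nonneg (b - a)
  have h1 := Int.fract_lt_one (b - a)
  constructor
  · linarith [hF.monotone (show a ≤ a + Int.fract (b - a) by linarith)]
  · linarith [hF1 a, hF (show a + Int.fract (b - a) < a + 1 by linarith)]

theorem StrictMono.circleSbtw_coe_map {F : ℝ → ℝ} (hF : StrictMono F)
    (hF1 : ∀ x, F (x + 1) = F x + 1) {a b c : ℝ} (h : circleSbtw a b c) :
    circleSbtw (F a : 𝕊) (F b) (F c) := by
  rw [circleSbtw_coe_iff] at h ⊢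
  rw [hF.fract_map_sub_map hF1, hF.fract_map_sub_map hF1, sub_pos, sub_lt_sub_iff_right]
  exact ⟨hF (lt_add_of_pos_right a h.1), hF (add_lt_add_right h.2 a)⟩

theorem OrderIso.exists_addCircle_homeomorph (F : ℝ ≃o ℝ) (hF1 : ∀ x, F (x + 1) = F x + 1) :
    ∃ Φ : 𝕊 ≃ₜ 𝕊, (∀ t : ℝ, Φ t = F t) ∧
      ∀ a b c, circleSbtw a b c → circleSbtw (Φ a) (Φ b) (Φ c) := by
  have hF1' (y : ℝ) : F.symm (y + 1) = F.symm y + 1 := by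
    rw [F.symm_apply_eq, hF1, F.apply_symm_apply]
  have periodic (G : ℝ ≃o ℝ) (hG : ∀ x, G (x + 1) = G x + 1) :
      Function.Periodic (fun t => (G t : 𝕊)) 1 := fun t => by
    simp only [hG, AddCircle.coe_add_period]
  have continuous_lift (G : ℝ ≃o ℝ) (hG : ∀ x, G (x + 1) = G x + 1) :
      Continuous (periodic G hG).lift :=
    (isQuotientMap_mk _).continuous_iff.2 (continuous_quotient_mk'.comp G.continuous)
  let Φ : 𝕊 ≃ₜ 𝕊 :=
    { toFun := (periodic F hF1).lift
      invFun := (periodic F.symm hF1').lift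
      left_inv := fun x => induction_on x fun t => by simp
      right_inv := fun x => induction_on x fun t => by simp
      continuous_toFun := continuous_lift F hF1
      continuous_invFun := continuous_lift F.symm hF1' }
  have hΦ (t : ℝ) : Φ t = F t := rfl
  refine ⟨Φ, hΦ, fun a b c h => ?_⟩
  induction a using induction_on
  induction b using induction_on
  induction c using induction_on
  simpa only [hΦ] using F.strictMono.circleSbtw_coe_map hF1 h

def PreservesCircleSbtwOn (ψ : 𝕊 → 𝕊) (D : Set 𝕊) : Prop :=
  ∀ a ∈ D, ∀ b ∈ D, ∀ c ∈ D, circleSbtw a b c → circleSbtw (ψ a) (ψ b) (ψ c)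

/-- Lift of `t ↦ ψ t` to `ℝ` counting the turns made since the base point `a`. -/
def circleLift (ψ : 𝕊 → 𝕊) (a t : ℝ) : ℝ :=
  circleRep (ψ a) + ⌊t - a⌋ + circleRep (ψ t - ψ a)

section Lift

variable {D : Set 𝕊} {ψ : 𝕊 → 𝕊}

theorem coe_circleLift (ψ : 𝕊 → 𝕊) (a t : ℝ) : (circleLift ψ a t : 𝕊) = ψ t := by
  simp only [circleLift, AddCircle.coe_add, AddCircle.coe_intCast_eq_zero, coe_circleRep]
  abel

theorem circleLift_add_intCast (ψ : 𝕊 → 𝕊) (a t : ℝ) (n : ℤ) :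
    circleLift ψ a (t + n) = circleLift ψ a t + n := by
  simp only [circleLift, AddCircle.coe_add, AddCircle.coe_intCast_eq_zero, add_zero,
    add_sub_right_comm t, Int.floor_add_intCast]
  push_cast
  ring

theorem circleLift_mem_Ico (ψ : 𝕊 → 𝕊) (a t : ℝ) :
    circleLift ψ a t ∈ Ico (circleRep (ψ a) + ⌊t - a⌋) (circleRep (ψ a) + ⌊t - a⌋ + 1) := by
  obtain ⟨h0, h1⟩ := circleRep_mem_Ico (ψ t - ψ a)
  exact ⟨by unfold circleLift; linarith, by unfold circleLift; linarith⟩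

theorem PreservesCircleSbtwOn.circleRep_sub_lt (hψ : PreservesCircleSbtwOn ψ D) (hD : Dense D)
    {x y z : 𝕊} (hx : x ∈ D) (hy : y ∈ D) (hz : z ∈ D)
    (h : circleRep (y - x) < circleRep (z - x)) :
    circleRep (ψ y - ψ x) < circleRep (ψ z - ψ x) := by
  rcases (circleRep_mem_Ico (y - x)).1.eq_or_lt with h0 | h0
  · obtain ⟨w, hw, hzw⟩ := hD.exists_circleSbtw (h0 ▸ h)
    rw [sub_eq_zero.1 (circleRep_eq_zero_iff.1 h0.symm), sub_self, circleRep_eq_zero_iff.2 rfl]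
    exact (hψ x hx z hz w hw hzw).1
  · exact (hψ x hx y hy z hz ⟨h0, h⟩).2

theorem PreservesCircleSbtwOn.strictMonoOn_circleLift (hψ : PreservesCircleSbtwOn ψ D)
    (hD : Dense D) {a : ℝ} (ha : (a : 𝕊) ∈ D) :
    StrictMonoOn (circleLift ψ a) ((↑) ⁻¹' D) := by
  intro s hs t ht hst
  rcases (Int.floor_mono (sub_le_sub_right hst.le a)).eq_or_lt with hfl | hfl
  · have hfract : Int.fract (s - a) < Int.fract (t - a) := by
      rw [Int.fract, Int.fract, hfl]
      linarith
    rw [← circleRep_coe, ← circleRep_coe, AddCircle.coe_sub, AddCircle.coe_sub] at hfract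
    have := hψ.circleRep_sub_lt hD ha hs ht hfract
    simp only [circleLift, hfl]
    linarith
  · have hs' := (circleLift_mem_Ico ψ a s).2
    have ht' := (circleLift_mem_Ico ψ a t).1
    have : (⌊s - a⌋ : ℝ) + 1 ≤ ⌊t - a⌋ := by exact_mod_cast hfl
    linarith

theorem dense_circleLift_image (him : Dense (ψ '' D)) (a : ℝ) :
    Dense (circleLift ψ a '' ((↑) ⁻¹' D)) := by
  refine dense_iff_exists_between.2 fun u v huv => ?_
  obtain ⟨w, ⟨x, hx, hxw⟩, huw, hwv⟩ := (dense_preimage_mk.2 him).exists_between huv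
  obtain ⟨t, rfl⟩ := mk_surjective x
  obtain ⟨n, hn⟩ : ∃ n : ℤ, n • (1 : ℝ) = circleLift ψ a t - w := by
    rw [← AddCircle.coe_eq_zero_iff, AddCircle.coe_sub, coe_circleLift, hxw, sub_self]
  refine ⟨circleLift ψ a (t + (-n : ℤ)), ⟨_, ?_, rfl⟩, ?_⟩
  · simpa only [mem_preimage, AddCircle.coe_add, AddCircle.coe_intCast_eq_zero, add_zero] using hx
  · rw [zsmul_one] at hn
    rw [circleLift_add_intCast]
    push_cast
    constructor <;> linarith

theorem PreservesCircleSbtwOn.exists_orderIso_lift (hψ : PreservesCircleSbtwOn ψ D)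
    (hD : Dense D) (him : Dense (ψ '' D)) :
    ∃ F : ℝ ≃o ℝ, (∀ x, F (x + 1) = F x + 1) ∧ ∀ t : ℝ, (t : 𝕊) ∈ D → (F t : 𝕊) = ψ t := by
  obtain ⟨x, hx⟩ := hD.nonempty
  obtain ⟨a, rfl⟩ := mk_surjective x
  have hS : Dense ((↑) ⁻¹' D : Set ℝ) := dense_preimage_mk.2 hD
  obtain ⟨F, hF⟩ := (hψ.strictMonoOn_circleLift hD hx).exists_orderIso_eqOn hS
    (dense_circleLift_image him a)
  have hS1 {s : ℝ} (hs : (s : 𝕊) ∈ D) : ((s + 1 : ℝ) : 𝕊) ∈ D := by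
    rwa [AddCircle.coe_add_period]
  refine ⟨F, congrFun (?_ : (fun x => F (x + 1)) = fun x => F x + 1), fun t ht => ?_⟩
  · refine Continuous.ext_on hS (F.continuous.comp (continuous_add_const 1))
      (F.continuous.add continuous_const) fun s hs => ?_
    simp only [hF hs, hF (hS1 hs)]
    exact_mod_cast circleLift_add_intCast ψ a s 1
  · rw [hF ht, coe_circleLift]

end Lift

/-- A circle map defined on a dense subset of `S¹` with dense image that strictly
preserves the counterclockwise cyclic order extends uniquely to an
orientation-preserving homeomorphism of `S¹`. -/
theorem circle_map_extends_to_homeomorph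
    (D : Set (AddCircle (1:ℝ))) (hD : Dense D)
    (ψ : AddCircle (1:ℝ) → AddCircle (1:ℝ))
    (him : Dense (ψ '' D))
    (hord : ∀ a ∈ D, ∀ b ∈ D, ∀ c ∈ D,
      circleSbtw a b c → circleSbtw (ψ a) (ψ b) (ψ c)) :
    ∃! Ψ : AddCircle (1:ℝ) ≃ₜ AddCircle (1:ℝ),
      (∀ x ∈ D, Ψ x = ψ x) ∧
      (∀ a b c, circleSbtw a b c → circleSbtw (Ψ a) (Ψ b) (Ψ c)) := by
  obtain ⟨F, hF1, hFD⟩ := PreservesCircleSbtwOn.exists_orderIso_lift hord hD him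
  obtain ⟨Ψ, hΨ, hΨsbtw⟩ := F.exists_addCircle_homeomorph hF1
  have hΨD : ∀ x ∈ D, Ψ x = ψ x := fun x hx => by
    induction x using induction_on
    rw [hΨ, hFD _ hx]
  refine ⟨Ψ, ⟨hΨD, hΨsbtw⟩, fun Ψ' hΨ' => Homeomorph.ext (congrFun ?_)⟩
  exact Continuous.ext_on hD Ψ'.continuous Ψ.continuous
    fun x hx => (hΨ'.1 x hx).trans (hΨD x hx).symm

end
end

section
/- For Lebesgue-almost every x ∈ (0,1), the average of the first N continued fraction coefficients of x tends to infinity as N → ∞: (a₁(x) + ⋯ + a_N(x))/N → ∞ almost surely. -/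
open MeasureTheory Filter

/-- The `(n+1)`-st continued fraction coefficient of `x`, obtained by iterating
the Gauss map `y ↦ frac(1/y)`; thus `cfCoeff 0 x = ⌊1/x⌋ = a₁(x)`. -/
noncomputable def cfCoeff (n : ℕ) (x : ℝ) : ℕ :=
  ⌊((fun y : ℝ => Int.fract y⁻¹)^[n] x)⁻¹⌋₊

/-!
Instead of the ergodic theorem, a Chernoff bound. Write `S_N` for the sum of the first `N`
coefficients. The transfer operator of the Gauss map fixes the Gauss density `1 / (1 + y)`;
weighting its branch with first coefficient `k + 1` by `e^{-t(k+1)}` shrinks that density by a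
factor `1 - δ(t)`. Iterating, `∫ e^{-t S_N} dx / (1 + x) ≤ (1 - δ(t))^N`, so the set where
`S_N ≤ C N` has measure at most `2 (e^{tC} (1 - δ(t)))^N`. Since `δ(t) / t → ∞` as `t → 0`
(the harmonic series diverges), some `t` makes this geometric, and Borel–Cantelli gives
`S_N > C N` eventually, for every `C`.
-/

open Set Real
open scoped ENNReal

lemma cfCoeff_succ (n : ℕ) (x : ℝ) : cfCoeff (n + 1) x = cfCoeff n (Int.fract x⁻¹) := by
  simp only [cfCoeff, Function.iterate_succ_apply]

lemma measurable_cfCoeff (n : ℕ) : Measurable (cfCoeff n) :=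
  ((measurable_fract.comp measurable_inv).iterate n).inv.nat_floor

noncomputable def cfSum (N : ℕ) (x : ℝ) : ℝ := ∑ i ∈ Finset.range N, (cfCoeff i x : ℝ)

@[fun_prop]
lemma measurable_cfSum (N : ℕ) : Measurable (cfSum N) :=
  Finset.measurable_sum _ fun i _ => measurable_from_top.comp (measurable_cfCoeff i)

/-- The inverse branch of the Gauss map onto the cylinder `{a₁ = k + 1}`. -/
noncomputable def gaussInvBranch (k : ℕ) (y : ℝ) : ℝ := ((k : ℝ) + 1 + y)⁻¹

section gaussInvBranch

variable (k : ℕ) {y : ℝ}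

lemma cfCoeff_zero_gaussInvBranch (hy : y ∈ Ioo (0 : ℝ) 1) :
    cfCoeff 0 (gaussInvBranch k y) = k + 1 := by
  rw [cfCoeff, gaussInvBranch, Function.iterate_zero_apply, inv_inv,
    Nat.floor_eq_iff (by linarith [hy.1])]
  push_cast
  constructor <;> linarith [hy.1, hy.2]

lemma cfCoeff_succ_gaussInvBranch (n : ℕ) (hy : y ∈ Ioo (0 : ℝ) 1) :
    cfCoeff (n + 1) (gaussInvBranch k y) = cfCoeff n y := by
  have hfract : Int.fract ((k : ℝ) + 1 + y) = y := by
    rw [show (k : ℝ) + 1 + y = ((k + 1 : ℕ) : ℤ) + y by push_cast; ring, Int.fract_intCast_add,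
      Int.fract_eq_self.2 ⟨hy.1.le, hy.2⟩]
  rw [cfCoeff_succ, gaussInvBranch, inv_inv, hfract]

lemma cfSum_succ_gaussInvBranch (N : ℕ) (hy : y ∈ Ioo (0 : ℝ) 1) :
    cfSum (N + 1) (gaussInvBranch k y) = k + 1 + cfSum N y := by
  simp only [cfSum, Finset.sum_range_succ', cfCoeff_succ_gaussInvBranch k _ hy,
    cfCoeff_zero_gaussInvBranch k hy]
  push_cast
  ring

lemma hasDerivAt_gaussInvBranch (hy : 0 ≤ y) :
    HasDerivAt (gaussInvBranch k) (-(((k : ℝ) + 1 + y) ^ 2)⁻¹) y := by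
  have h : HasDerivAt (fun y : ℝ => (k : ℝ) + 1 + y) 1 y := (hasDerivAt_id y).const_add _
  unfold gaussInvBranch
  simpa [Function.comp_def] using (hasDerivAt_inv (by positivity)).comp y h

lemma injOn_gaussInvBranch : InjOn (gaussInvBranch k) (Ioo 0 1) := by
  intro a _ b _ h
  simpa [gaussInvBranch] using h

lemma gaussInvBranch_mem_Ioo (hy : y ∈ Ioo (0 : ℝ) 1) : gaussInvBranch k y ∈ Ioo (0 : ℝ) 1 :=
  ⟨inv_pos.2 (by linarith [hy.1]), inv_lt_one_of_one_lt₀ (by linarith [hy.1])⟩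

end gaussInvBranch

lemma pairwise_disjoint_image_gaussInvBranch :
    Pairwise (Function.onFun Disjoint fun k => gaussInvBranch k '' Ioo 0 1) := by
  intro j k hjk
  refine disjoint_left.2 ?_
  rintro _ ⟨y, hy, rfl⟩ ⟨z, hz, h⟩
  have := (cfCoeff_zero_gaussInvBranch k hz).symm.trans (h ▸ cfCoeff_zero_gaussInvBranch j hy)
  omega

lemma Ioo_ae_eq_iUnion_image_gaussInvBranch :
    Ioo (0 : ℝ) 1 =ᵐ[volume] ⋃ k, gaussInvBranch k '' Ioo 0 1 := by
  have hcover :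
      Ioo (0 : ℝ) 1 \ ⋃ k, gaussInvBranch k '' Ioo 0 1 ⊆ range fun n : ℕ => (n : ℝ)⁻¹ := by
    rintro x ⟨⟨hx0, hx1⟩, hx⟩
    by_contra hrange
    have hn : 1 ≤ ⌊x⁻¹⌋₊ := Nat.le_floor (by simpa using (one_lt_inv₀ hx0).2 hx1 |>.le)
    obtain ⟨k, hk⟩ := Nat.exists_eq_add_of_le' hn
    refine hx (mem_iUnion.2 ⟨k, x⁻¹ - (k + 1), ⟨?_, ?_⟩, ?_⟩)
    · have hle : (k : ℝ) + 1 ≤ x⁻¹ := by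
        exact_mod_cast hk ▸ Nat.floor_le (inv_pos.2 hx0).le
      refine sub_pos.2 (hle.lt_of_ne fun heq => hrange ⟨k + 1, ?_⟩)
      simp [heq]
    · have := Nat.lt_floor_add_one x⁻¹
      rw [hk] at this
      push_cast at this
      linarith
    · simp [gaussInvBranch]
  refine ae_eq_set.2 ⟨measure_mono_null hcover ((countable_range _).measure_zero _), ?_⟩
  have hsub : ⋃ k, gaussInvBranch k '' Ioo 0 1 ⊆ Ioo 0 1 :=
    iUnion_subset fun k => image_subset_iff.2 fun y hy => gaussInvBranch_mem_Ioo k hy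
  rw [sdiff_eq_empty.2 hsub, measure_empty]

lemma lintegral_Ioo_zero_one_eq_tsum (f : ℝ → ℝ≥0∞) :
    ∫⁻ x in Ioo 0 1, f x = ∑' k : ℕ, ∫⁻ y in Ioo 0 1,
      ENNReal.ofReal (((k : ℝ) + 1 + y) ^ 2)⁻¹ * f (gaussInvBranch k y) := by
  have hderiv : ∀ k : ℕ, ∀ y ∈ Ioo (0 : ℝ) 1, HasDerivWithinAt (gaussInvBranch k)
      (-(((k : ℝ) + 1 + y) ^ 2)⁻¹) (Ioo 0 1) y :=
    fun k y hy => (hasDerivAt_gaussInvBranch k hy.1.le).hasDerivWithinAt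
  have hmeas (k : ℕ) : MeasurableSet (gaussInvBranch k '' Ioo 0 1) :=
    measurableSet_Ioo.image_of_continuousOn_injOn
      (fun y hy => (hderiv k y hy).continuousWithinAt) (injOn_gaussInvBranch k)
  conv_lhs => rw [Measure.restrict_congr_set Ioo_ae_eq_iUnion_image_gaussInvBranch,
    lintegral_iUnion hmeas pairwise_disjoint_image_gaussInvBranch]
  refine tsum_congr fun k => ?_
  rw [lintegral_image_eq_lintegral_abs_deriv_mul measurableSet_Ioo (hderiv k)
    (injOn_gaussInvBranch k)]
  simp only [abs_neg, abs_inv, abs_sq]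

lemma hasSum_inv_mul_add_one {c : ℝ} (hc : 0 < c) :
    HasSum (fun k : ℕ => (((k : ℝ) + c) * ((k : ℝ) + c + 1))⁻¹) c⁻¹ := by
  have hterm (k : ℕ) : (((k : ℝ) + c) * ((k : ℝ) + c + 1))⁻¹
      = ((k : ℝ) + c)⁻¹ - (((k + 1 : ℕ) : ℝ) + c)⁻¹ := by
    have : (0 : ℝ) < k + c := by positivity
    push_cast
    field_simp
    ring
  have hpartial (n : ℕ) : ∑ k ∈ Finset.range n, (((k : ℝ) + c) * ((k : ℝ) + c + 1))⁻¹
      = c⁻¹ - ((n : ℝ) + c)⁻¹ := by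
    rw [Finset.sum_congr rfl fun k _ => hterm k, Finset.sum_range_sub']
    simp
  rw [hasSum_iff_tendsto_nat_of_nonneg (fun k => by positivity), funext hpartial]
  simpa using tendsto_const_nhds.sub (tendsto_inv_atTop_zero.comp
    (tendsto_atTop_add_const_right _ c tendsto_natCast_atTop_atTop))

/-- The Gauss density `1 / (1 + y)` is a fixed point of the transfer operator of the Gauss map. -/
lemma hasSum_gaussDensity {y : ℝ} (hy : 0 ≤ y) :
    HasSum (fun k : ℕ => (((k : ℝ) + 1 + y) * ((k : ℝ) + 2 + y))⁻¹) (1 + y)⁻¹ := by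
  convert hasSum_inv_mul_add_one (c := 1 + y) (by positivity) using 3 with k
  ring

/-- A lower bound, uniform in `y ∈ (0, 1)`, for
`(1 + y) ∑_{k<K} (1 - e^{-t(k+1)}) / ((k + 1 + y) (k + 2 + y))`. -/
noncomputable def gaussGap (K : ℕ) (t : ℝ) : ℝ :=
  ∑ k ∈ Finset.range K, (1 - exp (-(t * ((k : ℝ) + 1)))) / (((k : ℝ) + 2) * ((k : ℝ) + 3))

/-- `e^{-t(k+1)} |(gaussInvBranch k)' y| / (1 + gaussInvBranch k y)`: the branch `k` term of the
transfer operator of the Gauss map, twisted by `e^{-t a₁}`, applied to the Gauss density. -/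
noncomputable def twistedKernel (t : ℝ) (k : ℕ) (y : ℝ) : ℝ :=
  exp (-(t * ((k : ℝ) + 1))) * (((k : ℝ) + 1 + y) * ((k : ℝ) + 2 + y))⁻¹

@[fun_prop]
lemma measurable_twistedKernel (t : ℝ) (k : ℕ) : Measurable (twistedKernel t k) := by
  unfold twistedKernel
  fun_prop

lemma tsum_ofReal_twistedKernel_le {t y : ℝ} (ht : 0 ≤ t) (hy : y ∈ Ioo (0 : ℝ) 1) (K : ℕ) :
    ∑' k : ℕ, ENNReal.ofReal (twistedKernel t k y)
      ≤ ENNReal.ofReal ((1 - gaussGap K t) / (1 + y)) := by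
  set e : ℕ → ℝ := fun k => exp (-(t * ((k : ℝ) + 1)))
  set g : ℕ → ℝ := fun k => (((k : ℝ) + 1 + y) * ((k : ℝ) + 2 + y))⁻¹
  have hy0 := hy.1
  have hg : HasSum g (1 + y)⁻¹ := hasSum_gaussDensity hy0.le
  have he0 (k : ℕ) : 0 < e k := exp_pos _
  have he1 (k : ℕ) : 0 ≤ 1 - e k := by
    simp only [e, sub_nonneg, exp_le_one_iff, neg_nonpos]
    positivity
  have hdg : Summable fun k => (1 - e k) * g k :=
    hg.summable.of_nonneg_of_le (fun k => mul_nonneg (he1 k) (by positivity))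
      fun k => mul_le_of_le_one_left (by positivity) (by linarith [he0 k])
  have heg : HasSum (twistedKernel t · y) ((1 + y)⁻¹ - ∑' k, (1 - e k) * g k) := by
    refine (hg.sub hdg.hasSum).congr_fun fun k => ?_
    simp only [twistedKernel, e, g]
    ring
  have hcompare (k : ℕ) : (((k : ℝ) + 2) * ((k : ℝ) + 3) * (1 + y))⁻¹ ≤ g k := by
    have hk : (0 : ℝ) ≤ k := k.cast_nonneg
    refine inv_anti₀ (by positivity) ?_
    nlinarith [mul_lt_mul_of_pos_left hy.2 hy0, mul_nonneg hy0.le hk]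
  have hgap : gaussGap K t / (1 + y) ≤ ∑' k, (1 - e k) * g k := calc
    gaussGap K t / (1 + y) = ∑ k ∈ Finset.range K, (1 - e k) *
        (((k : ℝ) + 2) * ((k : ℝ) + 3) * (1 + y))⁻¹ := by
      rw [gaussGap, Finset.sum_div]
      exact Finset.sum_congr rfl fun k _ => by rw [div_div, div_eq_mul_inv]
    _ ≤ ∑ k ∈ Finset.range K, (1 - e k) * g k :=
      Finset.sum_le_sum fun k _ => mul_le_mul_of_nonneg_left (hcompare k) (he1 k)
    _ ≤ ∑' k, (1 - e k) * g k :=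
      hdg.sum_le_tsum _ fun k _ => mul_nonneg (he1 k) (by positivity)
  rw [← ENNReal.ofReal_tsum_of_nonneg (fun k => by unfold twistedKernel; positivity) heg.summable,
    heg.tsum_eq]
  refine ENNReal.ofReal_le_ofReal ?_
  rw [sub_div, one_div]
  linarith

noncomputable def cfLaplace (t : ℝ) (N : ℕ) : ℝ≥0∞ :=
  ∫⁻ x in Ioo 0 1, ENNReal.ofReal (exp (-(t * cfSum N x)) / (1 + x))

lemma cfLaplace_zero_le (t : ℝ) : cfLaplace t 0 ≤ 1 := calc
  cfLaplace t 0 ≤ ∫⁻ _ in Ioo (0 : ℝ) 1, 1 := by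
    refine setLIntegral_mono' measurableSet_Ioo fun x hx => ENNReal.ofReal_le_one.2 ?_
    simpa [cfSum] using inv_le_one_of_one_le₀ (by linarith [hx.1] : (1 : ℝ) ≤ 1 + x)
  _ = 1 := by simp

lemma ofReal_mul_cfLaplace_integrand_gaussInvBranch (t : ℝ) (N k : ℕ) {y : ℝ}
    (hy : y ∈ Ioo (0 : ℝ) 1) :
    ENNReal.ofReal (((k : ℝ) + 1 + y) ^ 2)⁻¹ * ENNReal.ofReal
        (exp (-(t * cfSum (N + 1) (gaussInvBranch k y))) / (1 + gaussInvBranch k y))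
      = ENNReal.ofReal (exp (-(t * cfSum N y))) * ENNReal.ofReal (twistedKernel t k y) := by
  have hy0 := hy.1
  rw [← ENNReal.ofReal_mul (by positivity), ← ENNReal.ofReal_mul (by positivity),
    cfSum_succ_gaussInvBranch k N hy, gaussInvBranch, twistedKernel, mul_add, neg_add, exp_add]
  congr 1
  field_simp
  ring

lemma cfLaplace_succ_le {t : ℝ} (ht : 0 ≤ t) (K N : ℕ) :
    cfLaplace t (N + 1) ≤ ENNReal.ofReal (1 - gaussGap K t) * cfLaplace t N := calc
  cfLaplace t (N + 1) = ∑' k : ℕ, ∫⁻ y in Ioo 0 1, ENNReal.ofReal (exp (-(t * cfSum N y))) *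
      ENNReal.ofReal (twistedKernel t k y) := by
    rw [cfLaplace, lintegral_Ioo_zero_one_eq_tsum]
    exact tsum_congr fun k => setLIntegral_congr_fun measurableSet_Ioo fun y hy =>
      ofReal_mul_cfLaplace_integrand_gaussInvBranch t N k hy
  _ = ∫⁻ y in Ioo 0 1, ENNReal.ofReal (exp (-(t * cfSum N y))) *
      ∑' k : ℕ, ENNReal.ofReal (twistedKernel t k y) := by
    rw [← lintegral_tsum fun k => by fun_prop]
    simp_rw [ENNReal.tsum_mul_left]
  _ ≤ ∫⁻ y in Ioo 0 1, ENNReal.ofReal (exp (-(t * cfSum N y))) *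
      ENNReal.ofReal ((1 - gaussGap K t) / (1 + y)) :=
    setLIntegral_mono' measurableSet_Ioo fun y hy => by
      gcongr
      exact tsum_ofReal_twistedKernel_le ht hy K
  _ = ENNReal.ofReal (1 - gaussGap K t) * cfLaplace t N := by
    rw [cfLaplace, ← lintegral_const_mul' _ _ ENNReal.ofReal_ne_top]
    refine setLIntegral_congr_fun measurableSet_Ioo fun y hy => ?_
    have hy0 := hy.1
    rw [← ENNReal.ofReal_mul (exp_pos _).le, ← ENNReal.ofReal_mul' (by positivity)]
    congr 1
    ring

lemma cfLaplace_le_pow {t : ℝ} (ht : 0 ≤ t) (K N : ℕ) :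
    cfLaplace t N ≤ ENNReal.ofReal (1 - gaussGap K t) ^ N := by
  induction N with
  | zero => simpa using cfLaplace_zero_le t
  | succ N ih => calc
      cfLaplace t (N + 1) ≤ ENNReal.ofReal (1 - gaussGap K t) * cfLaplace t N :=
        cfLaplace_succ_le ht K N
      _ ≤ ENNReal.ofReal (1 - gaussGap K t) ^ (N + 1) := by
        rw [pow_succ']
        gcongr

lemma measure_cfSum_le_le (C : ℝ) {t : ℝ} (ht : 0 ≤ t) (N : ℕ) :
    volume.restrict (Ioo (0 : ℝ) 1) {x | cfSum N x ≤ C * N}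
      ≤ 2 * ENNReal.ofReal (exp (t * C)) ^ N * cfLaplace t N := by
  set f : ℝ → ℝ≥0∞ := fun x =>
    2 * ENNReal.ofReal (exp (t * C)) ^ N * ENNReal.ofReal (exp (-(t * cfSum N x)) / (1 + x))
  have hbad : ∀ x ∈ Ioo (0 : ℝ) 1, cfSum N x ≤ C * N → 1 ≤ f x := by
    intro x hx hxN
    have hexp : 1 ≤ exp (t * C) ^ N * exp (-(t * cfSum N x)) := by
      rw [← exp_nat_mul, ← exp_add, one_le_exp_iff]
      nlinarith
    have hdens : 1 ≤ 2 / (1 + x) := by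
      rw [le_div_iff₀ (by linarith [hx.1])]
      linarith [hx.2]
    simp only [f]
    rw [← ENNReal.ofReal_pow (exp_pos _).le, ← ENNReal.ofReal_ofNat 2,
      ← ENNReal.ofReal_mul zero_le_two, ← ENNReal.ofReal_mul (by positivity),
      ENNReal.one_le_ofReal]
    calc (1 : ℝ) ≤ (exp (t * C) ^ N * exp (-(t * cfSum N x))) * (2 / (1 + x)) :=
          one_le_mul_of_one_le_of_one_le hexp hdens
      _ = 2 * exp (t * C) ^ N * (exp (-(t * cfSum N x)) / (1 + x)) := by ring
  calc volume.restrict (Ioo (0 : ℝ) 1) {x | cfSum N x ≤ C * N}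
      ≤ volume.restrict (Ioo (0 : ℝ) 1) {x | 1 ≤ f x} :=
        measure_mono_ae (ae_restrict_of_forall_mem measurableSet_Ioo hbad)
    _ ≤ ∫⁻ x in Ioo 0 1, f x := by
        simpa only [one_mul] using mul_meas_ge_le_lintegral₀ (μ := volume.restrict (Ioo 0 1))
          (show Measurable f by fun_prop).aemeasurable 1
    _ = 2 * ENNReal.ofReal (exp (t * C)) ^ N * cfLaplace t N :=
        lintegral_const_mul' _ _ (ENNReal.mul_ne_top (by simp) (by simp))

lemma half_le_one_sub_exp_neg {u : ℝ} (h0 : 0 ≤ u) (h1 : u ≤ 1) : u / 2 ≤ 1 - exp (-u) := by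
  have h : exp (-u) * (1 + u) ≤ 1 := calc
    exp (-u) * (1 + u) ≤ exp (-u) * exp u := by gcongr; linarith [add_one_le_exp u]
    _ = 1 := by rw [← exp_add, neg_add_cancel, exp_zero]
  nlinarith [exp_pos (-u), mul_nonneg h0 (sub_nonneg.2 h1)]

lemma exists_lt_gaussGap (C : ℝ) : ∃ K : ℕ, ∃ t > 0, t * C < gaussGap K t := by
  -- With `t = 1 / (K + 1)`, the `k`-th term of `gaussGap K t` is at least `t / (12 (k + 1))`.
  obtain ⟨K, hK⟩ :=
    (tendsto_sum_range_one_div_nat_succ_atTop.eventually_gt_atTop (12 * C)).exists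
  set t : ℝ := ((K : ℝ) + 1)⁻¹
  have ht : 0 < t := by positivity
  refine ⟨K, t, ht, ?_⟩
  have hterm (k : ℕ) (hk : k ∈ Finset.range K) : t / 12 * (1 / ((k : ℝ) + 1))
      ≤ (1 - exp (-(t * ((k : ℝ) + 1)))) / (((k : ℝ) + 2) * ((k : ℝ) + 3)) := by
    have hkK : (k : ℝ) + 1 ≤ K + 1 := by
      have := Finset.mem_range.1 hk
      exact_mod_cast (by omega : k + 1 ≤ K + 1)
    have hu : t * ((k : ℝ) + 1) ≤ 1 := by
      rw [inv_mul_le_one₀ (by positivity)]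
      exact hkK
    calc t / 12 * (1 / ((k : ℝ) + 1)) = t * ((k : ℝ) + 1) / 2 / (6 * ((k : ℝ) + 1) ^ 2) := by
          field_simp
          ring
      _ ≤ (1 - exp (-(t * ((k : ℝ) + 1)))) / (6 * ((k : ℝ) + 1) ^ 2) := by
          gcongr
          exact half_le_one_sub_exp_neg (by positivity) hu
      _ ≤ (1 - exp (-(t * ((k : ℝ) + 1)))) / (((k : ℝ) + 2) * ((k : ℝ) + 3)) := by
          refine div_le_div_of_nonneg_left ?_ (by positivity) (by nlinarith)
          exact (div_nonneg (by positivity) zero_le_two).trans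
            (half_le_one_sub_exp_neg (by positivity) hu)
  calc t * C = t / 12 * (12 * C) := by ring
    _ < t / 12 * ∑ k ∈ Finset.range K, 1 / ((k : ℝ) + 1) := by gcongr
    _ ≤ gaussGap K t := by
      rw [Finset.mul_sum]
      exact Finset.sum_le_sum hterm

lemma exists_measure_cfSum_le_le_geometric (C : ℝ) : ∃ r < 1, ∀ N : ℕ,
    volume.restrict (Ioo (0 : ℝ) 1) {x | cfSum N x ≤ C * N} ≤ 2 * r ^ N := by
  obtain ⟨K, t, ht, hgap⟩ := exists_lt_gaussGap C
  refine ⟨ENNReal.ofReal (exp (t * C) * (1 - gaussGap K t)), ?_, fun N => ?_⟩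
  · rw [ENNReal.ofReal_lt_one]
    calc exp (t * C) * (1 - gaussGap K t) ≤ exp (t * C) * exp (-gaussGap K t) := by
          gcongr
          linarith [add_one_le_exp (-gaussGap K t)]
      _ = exp (t * C - gaussGap K t) := by rw [← exp_add, sub_eq_add_neg]
      _ < 1 := exp_lt_one_iff.2 (by linarith)
  calc volume.restrict (Ioo (0 : ℝ) 1) {x | cfSum N x ≤ C * N}
      ≤ 2 * ENNReal.ofReal (exp (t * C)) ^ N * cfLaplace t N := measure_cfSum_le_le C ht.le N
    _ ≤ 2 * ENNReal.ofReal (exp (t * C)) ^ N * ENNReal.ofReal (1 - gaussGap K t) ^ N := by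
        gcongr
        exact cfLaplace_le_pow ht.le K N
    _ = 2 * ENNReal.ofReal (exp (t * C) * (1 - gaussGap K t)) ^ N := by
        rw [ENNReal.ofReal_mul (exp_pos _).le, mul_pow, mul_assoc]

lemma ae_eventually_notMem_of_le_geometric {α : Type*} [MeasurableSpace α] {μ : Measure α}
    {s : ℕ → Set α} {c r : ℝ≥0∞} (hc : c ≠ ∞) (hr : r < 1)
    (hs : ∀ n, μ (s n) ≤ c * r ^ n) :
    ∀ᵐ x ∂μ, ∀ᶠ n in atTop, x ∉ s n := by
  refine ae_eventually_notMem (ne_top_of_le_ne_top ?_ (ENNReal.tsum_le_tsum hs))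
  rw [ENNReal.tsum_mul_left, ENNReal.tsum_geometric]
  exact ENNReal.mul_ne_top hc (ENNReal.inv_ne_top.2 (tsub_pos_iff_lt.2 hr).ne')

lemma ae_eventually_mul_lt_cfSum (C : ℝ) :
    ∀ᵐ x ∂volume.restrict (Ioo (0 : ℝ) 1), ∀ᶠ N in atTop, C * N < cfSum N x := by
  obtain ⟨r, hr, hbound⟩ := exists_measure_cfSum_le_le_geometric C
  filter_upwards [ae_eventually_notMem_of_le_geometric ENNReal.ofNat_ne_top hr hbound] with x hx
  filter_upwards [hx] with N hN
  simpa using hN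

lemma tendsto_div_atTop_of_eventually_mul_lt {s : ℕ → ℝ}
    (h : ∀ C : ℕ, ∀ᶠ N in atTop, (C : ℝ) * N < s N) :
    Tendsto (fun N => s N / N) atTop atTop := by
  refine tendsto_atTop.2 fun b => ?_
  filter_upwards [h ⌈b⌉₊, eventually_gt_atTop 0] with N hN hN0
  rw [le_div_iff₀ (by exact_mod_cast hN0)]
  nlinarith [Nat.le_ceil b, (Nat.cast_pos.2 hN0 : (0 : ℝ) < N)]

/-- For Lebesgue-almost every `x ∈ (0,1)`, the average of the first `N`
continued fraction coefficients of `x` tends to infinity as `N → ∞`. -/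
theorem cf_coefficient_averages_tendsto_atTop :
    ∀ᵐ x ∂(volume.restrict (Set.Ioo (0:ℝ) 1)),
      Tendsto (fun N : ℕ => (∑ i ∈ Finset.range N, (cfCoeff i x : ℝ)) / N)
        atTop atTop := by
  filter_upwards [ae_all_iff.2 fun C : ℕ => ae_eventually_mul_lt_cfSum C] with x hx
  exact tendsto_div_atTop_of_eventually_mul_lt hx
end
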